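/- For all k ≥ 1, t(2^(2k)) = 2^k + 1; for all k ≥ 0, t(2^(2k+1)) = 1, t(2^(2k) − 1) = 2^k, and t(2^(2k+1) − 1) = 0. -/

import Mathlib

def rs : ℕ → ℤ
  | 0 => 1
  | (n+1) =>
    if (n+1) % 2 = 0 then rs ((n+1)/2)
    else (-1)^((n+1)/2) * rs ((n+1)/2)
decreasing_by all_goals exact Nat.div_lt_self (Nat.succ_pos n) (by norm_num)

def s (n : ℕ) : ℤ := ∑ i ∈ Finset.range (n+1), rs i

def t (n : ℕ) : ℤ := ∑ i ∈ Finset.range (n+1), (-1)^i * rs i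

/-! The alternating partial sums `altSum (n + 1) = t n` satisfy `altSum (4 * M) = 2 * altSum M`,
because each block `4m, …, 4m + 3` contributes `rs m, rs m, (-1)^m rs m, -(-1)^m rs m` with signs
`+, -, +, -`, in total `2 (-1)^m rs m`. Iterating from `altSum 1 = 1` and `altSum 2 = 0` gives
`t (2^(2k) - 1) = 2^k` and `t (2^(2k+1) - 1) = 0`; the last term `rs (2^n) = 1`, with sign `+`
for `n ≥ 1`, gives the other two values. -/

lemma rs_zero : rs 0 = 1 := by
  rw [rs]

lemma rs_two_mul (n : ℕ) : rs (2 * n) = rs n := by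
  cases n with
  | zero => rfl
  | succ m =>
    rw [show 2 * (m + 1) = (2 * m + 1) + 1 by omega, rs]
    simp [show (2 * m + 1 + 1) % 2 = 0 by omega, show (2 * m + 1 + 1) / 2 = m + 1 by omega]

lemma rs_two_mul_add_one (n : ℕ) : rs (2 * n + 1) = (-1) ^ n * rs n := by
  rw [rs]
  simp [show (2 * n + 1) / 2 = n by omega]

lemma rs_two_pow (k : ℕ) : rs (2 ^ k) = 1 := by
  induction k with
  | zero => simpa [rs_zero] using rs_two_mul_add_one 0
  | succ k ih => rw [pow_succ', rs_two_mul, ih]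

lemma rs_four_mul (n : ℕ) : rs (4 * n) = rs n := by
  rw [show 4 * n = 2 * (2 * n) by ring, rs_two_mul, rs_two_mul]

lemma rs_four_mul_add_one (n : ℕ) : rs (4 * n + 1) = rs n := by
  rw [show 4 * n + 1 = 2 * (2 * n) + 1 by ring, rs_two_mul_add_one, rs_two_mul, pow_mul]
  norm_num

lemma rs_four_mul_add_two (n : ℕ) : rs (4 * n + 2) = (-1) ^ n * rs n := by
  rw [show 4 * n + 2 = 2 * (2 * n + 1) by ring, rs_two_mul, rs_two_mul_add_one]

lemma rs_four_mul_add_three (n : ℕ) : rs (4 * n + 3) = -((-1) ^ n * rs n) := by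
  rw [show 4 * n + 3 = 2 * (2 * n + 1) + 1 by ring, rs_two_mul_add_one, rs_two_mul_add_one,
    pow_add, pow_mul]
  ring

def altSum (n : ℕ) : ℤ := ∑ i ∈ Finset.range n, (-1) ^ i * rs i

lemma altSum_succ (n : ℕ) : altSum (n + 1) = altSum n + (-1) ^ n * rs n :=
  Finset.sum_range_succ _ _

lemma t_eq_altSum (n : ℕ) : t n = altSum (n + 1) := rfl

lemma altSum_one : altSum 1 = 1 := by
  simp [altSum, rs_zero]

lemma altSum_two : altSum 2 = 0 := by
  simp [altSum, Finset.sum_range_succ, rs_zero, rs_two_mul_add_one 0]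

lemma altSum_four_mul (M : ℕ) : altSum (4 * M) = 2 * altSum M := by
  induction M with
  | zero => simp [altSum]
  | succ m ih =>
    rw [show 4 * (m + 1) = 4 * m + 3 + 1 by ring, altSum_succ, altSum_succ, altSum_succ,
      altSum_succ, ih, altSum_succ, rs_four_mul, rs_four_mul_add_one, rs_four_mul_add_two,
      rs_four_mul_add_three]
    simp only [pow_add, pow_mul]
    ring

lemma altSum_four_pow_mul (k M : ℕ) : altSum (4 ^ k * M) = 2 ^ k * altSum M := by
  induction k with
  | zero => simp
  | succ k ih => rw [pow_succ', mul_assoc, altSum_four_mul, ih, pow_succ']; ring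

lemma altSum_two_pow_two_mul (k : ℕ) : altSum (2 ^ (2 * k)) = 2 ^ k := by
  simpa [pow_mul, altSum_one] using altSum_four_pow_mul k 1

lemma altSum_two_pow_two_mul_add_one (k : ℕ) : altSum (2 ^ (2 * k + 1)) = 0 := by
  simpa [pow_succ, pow_mul, altSum_two] using altSum_four_pow_mul k 2

lemma t_two_pow (n : ℕ) (hn : 1 ≤ n) : t (2 ^ n) = altSum (2 ^ n) + 1 := by
  have hev : Even (2 ^ n) := Nat.even_pow.mpr ⟨even_two, by omega⟩
  rw [t_eq_altSum, altSum_succ, hev.neg_one_pow, rs_two_pow, one_mul]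

lemma t_two_pow_sub_one (n : ℕ) : t (2 ^ n - 1) = altSum (2 ^ n) := by
  rw [t_eq_altSum, Nat.sub_add_cancel Nat.one_le_two_pow]

theorem stmt15 : (∀ k : ℕ, 1 ≤ k → t (2^(2*k)) = 2^k + 1) ∧
    (∀ k : ℕ, t (2^(2*k+1)) = 1) ∧
    (∀ k : ℕ, t (2^(2*k) - 1) = 2^k) ∧
    (∀ k : ℕ, t (2^(2*k+1) - 1) = 0) := by
  refine ⟨fun k hk => ?_, fun k => ?_, fun k => ?_, fun k => ?_⟩
  · rw [t_two_pow _ (by omega), altSum_two_pow_two_mul]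
  · rw [t_two_pow _ (by omega), altSum_two_pow_two_mul_add_one, zero_add]
  · rw [t_two_pow_sub_one, altSum_two_pow_two_mul]
  · rw [t_two_pow_sub_one, altSum_two_pow_two_mul_add_one]
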